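/- arXiv:1402.2691 — 3 statements merged into one kernel-verified Lean document; each statement's English description precedes it below -/
import Mathlib

section
/- Let c₁ ≤ c₂ be real numbers and let t > 0 satisfy t < π/√c₂ if c₂ > 0. Then sn_{c₁}'(t)·sn_{c₂}(t) ≥ sn_{c₂}'(t)·sn_{c₁}(t); equivalently, since sn_{c₁}(t) > 0 and sn_{c₂}(t) > 0, the normal curvature μ^{c₁}(t) = sn_{c₁}'(t)/sn_{c₁}(t) of the geodesic sphere of radius t in the model space of curvature c₁ is at least μ^{c₂}(t) = sn_{c₂}'(t)/sn_{c₂}(t). -/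
/-!
Both `gsin c` and its derivative `gcos c` solve `y'' = -c y`, so the Wronskian-type quantity
`W = gcos c₁ * gsin c₂ - gcos c₂ * gsin c₁` satisfies `W' = (c₂ - c₁) * gsin c₁ * gsin c₂` and
`W 0 = 0` (Sturm comparison). Below the first conjugate point `π / √c₂` both generalized sines are
positive, so `W` is nondecreasing and `W t ≥ 0`; dividing by `gsin c₁ t * gsin c₂ t > 0` gives the
curvature form.
-/

/-- The generalized sine function `sn_c` of the simply connected space form
of constant curvature `c`. -/
noncomputable def gsin (c : ℝ) (t : ℝ) : ℝ :=
  if 0 < c then (1 / Real.sqrt c) * Real.sin (Real.sqrt c * t)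
  else if c = 0 then t
  else (1 / Real.sqrt (-c)) * Real.sinh (Real.sqrt (-c) * t)

open Real Set

noncomputable def gcos (c : ℝ) (t : ℝ) : ℝ :=
  if 0 < c then cos (√c * t)
  else if c = 0 then 1
  else cosh (√(-c) * t)

lemma gsin_zero (c : ℝ) : gsin c 0 = 0 := by
  unfold gsin; split_ifs <;> simp

lemma hasDerivAt_gsin (c t : ℝ) : HasDerivAt (gsin c) (gcos c t) t := by
  rcases lt_trichotomy 0 c with hc | rfl | hc
  · have hs : √c ≠ 0 := (sqrt_pos.mpr hc).ne'
    rw [show gsin c = fun s => 1 / √c * sin (√c * s) by funext s; simp [gsin, hc]]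
    refine (((hasDerivAt_sin _).comp t (hasDerivAt_const_mul _)).const_mul _).congr_deriv ?_
    rw [gcos, if_pos hc]; field_simp
  · rw [show gsin 0 = id by funext s; simp [gsin]]
    exact (hasDerivAt_id t).congr_deriv (by simp [gcos])
  · have hs : √(-c) ≠ 0 := (sqrt_pos.mpr (neg_pos.mpr hc)).ne'
    rw [show gsin c = fun s => 1 / √(-c) * sinh (√(-c) * s) by
      funext s; simp [gsin, hc.not_gt, hc.ne]]
    refine (((hasDerivAt_sinh _).comp t (hasDerivAt_const_mul _)).const_mul _).congr_deriv ?_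
    rw [gcos, if_neg hc.not_gt, if_neg hc.ne]; field_simp

lemma hasDerivAt_gcos (c t : ℝ) : HasDerivAt (gcos c) (-c * gsin c t) t := by
  rcases lt_trichotomy 0 c with hc | rfl | hc
  · have hs : √c ≠ 0 := (sqrt_pos.mpr hc).ne'
    rw [show gcos c = fun s => cos (√c * s) by funext s; simp [gcos, hc]]
    refine ((hasDerivAt_cos _).comp t (hasDerivAt_const_mul _)).congr_deriv ?_
    rw [gsin, if_pos hc]; field_simp; rw [sq_sqrt hc.le]; ring
  · rw [show gcos 0 = fun _ => 1 by funext s; simp [gcos]]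
    exact (hasDerivAt_const t (1 : ℝ)).congr_deriv (by simp)
  · have hs : √(-c) ≠ 0 := (sqrt_pos.mpr (neg_pos.mpr hc)).ne'
    rw [show gcos c = fun s => cosh (√(-c) * s) by funext s; simp [gcos, hc.not_gt, hc.ne]]
    refine ((hasDerivAt_cosh _).comp t (hasDerivAt_const_mul _)).congr_deriv ?_
    rw [gsin, if_neg hc.not_gt, if_neg hc.ne]; field_simp; rw [sq_sqrt (neg_pos.mpr hc).le]; ring

lemma gsin_pos {c s : ℝ} (hs : 0 < s) (h : 0 < c → s < π / √c) : 0 < gsin c s := by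
  rcases lt_trichotomy 0 c with hc | rfl | hc
  · have hsqrt : 0 < √c := sqrt_pos.mpr hc
    have hsin : 0 < sin (√c * s) :=
      sin_pos_of_pos_of_lt_pi (by positivity) (by rw [mul_comm, ← lt_div_iff₀ hsqrt]; exact h hc)
    rw [gsin, if_pos hc]
    positivity
  · simpa [gsin] using hs
  · have hsqrt : 0 < √(-c) := sqrt_pos.mpr (neg_pos.mpr hc)
    have hsinh : 0 < sinh (√(-c) * s) := sinh_pos_iff.mpr (by positivity)
    rw [gsin, if_neg hc.not_gt, if_neg hc.ne]
    positivity

lemma gsin_pos_of_le {c c' s t : ℝ} (hcc' : c ≤ c') (hs : 0 < s) (hst : s ≤ t)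
    (ht : 0 < c' → t < π / √c') : 0 < gsin c s :=
  gsin_pos hs fun hc => hst.trans_lt <| (ht (hc.trans_le hcc')).trans_le <|
    div_le_div_of_nonneg_left pi_pos.le (sqrt_pos.mpr hc) (sqrt_le_sqrt hcc')

lemma gcos_mul_gsin_le_gcos_mul_gsin {c₁ c₂ t : ℝ} (hc : c₁ ≤ c₂) (ht : 0 ≤ t)
    (hpos : ∀ s ∈ Ioo 0 t, 0 ≤ gsin c₁ s * gsin c₂ s) :
    gcos c₂ t * gsin c₁ t ≤ gcos c₁ t * gsin c₂ t := by
  set W : ℝ → ℝ := fun s => gcos c₁ s * gsin c₂ s - gcos c₂ s * gsin c₁ s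
  have hW : ∀ s, HasDerivAt W ((c₂ - c₁) * (gsin c₁ s * gsin c₂ s)) s := fun s =>
    (((hasDerivAt_gcos c₁ s).mul (hasDerivAt_gsin c₂ s)).sub
      ((hasDerivAt_gcos c₂ s).mul (hasDerivAt_gsin c₁ s))).congr_deriv (by ring)
  have hmono : MonotoneOn W (Icc 0 t) :=
    monotoneOn_of_hasDerivWithinAt_nonneg (convex_Icc 0 t)
      (continuous_iff_continuousAt.mpr fun s => (hW s).continuousAt).continuousOn
      (fun s _ => (hW s).hasDerivWithinAt)
      (fun s hs => mul_nonneg (sub_nonneg.mpr hc) (hpos s (by rwa [interior_Icc] at hs)))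
  have hW0t := hmono (left_mem_Icc.mpr ht) (right_mem_Icc.mpr ht) ht
  simp only [W, gsin_zero, mul_zero, sub_zero] at hW0t
  linarith

/-- Comparison of normal curvatures of geodesic spheres in space forms: if
`c₁ ≤ c₂` and `0 < t` (with `t < π/√c₂` when `c₂ > 0`), then
`sn_{c₁}'(t)·sn_{c₂}(t) ≥ sn_{c₂}'(t)·sn_{c₁}(t)`, equivalently
`sn_{c₁}'(t)/sn_{c₁}(t) ≥ sn_{c₂}'(t)/sn_{c₂}(t)`. -/
theorem gsin_sphere_normal_curvature_comparison (c₁ c₂ t : ℝ)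
    (hc : c₁ ≤ c₂) (ht : 0 < t) (ht' : 0 < c₂ → t < Real.pi / Real.sqrt c₂) :
    deriv (gsin c₂) t * gsin c₁ t ≤ deriv (gsin c₁) t * gsin c₂ t ∧
      deriv (gsin c₂) t / gsin c₂ t ≤ deriv (gsin c₁) t / gsin c₁ t := by
  have hpos₁ : ∀ s ∈ Ioc 0 t, 0 < gsin c₁ s := fun s hs => gsin_pos_of_le hc hs.1 hs.2 ht'
  have hpos₂ : ∀ s ∈ Ioc 0 t, 0 < gsin c₂ s := fun s hs => gsin_pos_of_le le_rfl hs.1 hs.2 ht'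
  have hcomp : gcos c₂ t * gsin c₁ t ≤ gcos c₁ t * gsin c₂ t :=
    gcos_mul_gsin_le_gcos_mul_gsin hc ht.le fun s hs =>
      (mul_pos (hpos₁ s (Ioo_subset_Ioc_self hs)) (hpos₂ s (Ioo_subset_Ioc_self hs))).le
  have htmem : t ∈ Ioc 0 t := ⟨ht, le_rfl⟩
  rw [(hasDerivAt_gsin c₁ t).deriv, (hasDerivAt_gsin c₂ t).deriv,
    div_le_div_iff₀ (hpos₂ t htmem) (hpos₁ t htmem)]
  exact ⟨hcomp, hcomp⟩
end

section
/- (Blaschke's Rolling Theorem, part A, plane version with explicit boundary curve.) Let D ⊆ ℝ² be a compact convex set with nonempty interior whose frontier is the image of a twice continuously differentiable curve γ : ℝ → ℝ² with ‖γ'(s)‖ = 1 for all s, and let N : ℝ → ℝ² satisfy, for every s: ‖N(s)‖ = 1, ⟨γ'(s), N(s)⟩ = 0, and ⟨x − γ(s), N(s)⟩ ≥ 0 for all x ∈ D (so N is the inner unit normal along γ). Suppose λ > 0 and the signed curvature with respect to N satisfies ⟨γ''(s), N(s)⟩ ≥ λ for all s. Then for every s, D is contained in the closed ball of radius 1/λ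 centered at γ(s) + (1/λ)·N(s). -/
/-!
Fix `x ∈ D` and put `a = l⟪x - γ, N⟫ - 1`, `b = l⟪x - γ, γ'⟫`, so that `a + b i` is `l` times
the position of `x` relative to the centre `γ + N/l`, read in the moving frame. In the plane `N`
is a fixed rotation of `γ'`, so the Frenet equations `γ'' = κN`, `N' = -κγ'` with
`κ = ⟪γ'', N⟫` hold and give `a' = -κb`, `b' = κ(a + 1) - l`, while `N` being an inner normal
says `a ≥ -1`.
Outside the unit disc the argument of `a + b i` then increases at rate at least `l`, so every
excursion out of the disc is short, and `(a² + b²)' = 2(κ - l)b`. During an excursion `a² + b²`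
rises and later falls, so `b` is positive at some time and negative at a later one; as `b` has
the sign of the argument, the argument would decrease.
-/

open scoped RealInnerProductSpace
open Module Set Complex Real

section MovingFrame

variable {F : Type*} [NormedAddCommGroup F] [InnerProductSpace ℝ F]

theorem HasDerivAt.inner_eq_zero_of_norm_eq {f : ℝ → F} {f' : F} {x c : ℝ}
    (hf : HasDerivAt f f' x) (h : ∀ t, ‖f t‖ = c) : ⟪f x, f'⟫ = 0 := by
  have h2 := hf.norm_sq
  simp only [h] at h2
  linarith [h2.unique (hasDerivAt_const x (c ^ 2))]

variable {γ T N : ℝ → F} {κ s : ℝ}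

theorem hasDerivAt_inner_sub_normal (x : F) (hγ : HasDerivAt γ (T s) s)
    (hN : HasDerivAt N (-κ • T s) s) (hTN : ⟪T s, N s⟫ = 0) :
    HasDerivAt (fun t => ⟪x - γ t, N t⟫) (-(κ * ⟪x - γ s, T s⟫)) s := by
  refine (((hasDerivAt_const s x).sub hγ).inner ℝ hN).congr_deriv ?_
  simp [inner_smul_right, hTN]

theorem hasDerivAt_inner_sub_tangent (x : F) (hγ : HasDerivAt γ (T s) s)
    (hT : HasDerivAt T (κ • N s) s) (hT1 : ‖T s‖ = 1) :
    HasDerivAt (fun t => ⟪x - γ t, T t⟫) (κ * ⟪x - γ s, N s⟫ - 1) s := by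
  refine (((hasDerivAt_const s x).sub hγ).inner ℝ hT).congr_deriv ?_
  simp [inner_smul_right, hT1]
  ring

end MovingFrame

section PlaneFrame

variable {E : Type*} [NormedAddCommGroup E] [InnerProductSpace ℝ E] [Fact (finrank ℝ E = 2)]

namespace Orientation

variable (o : Orientation ℝ E (Fin 2))

local notation "J" => o.rightAngleRotation

theorem eq_inner_rightAngleRotation_smul_of_inner_eq_zero {T y : E} (hT : ‖T‖ = 1)
    (hy : ⟪T, y⟫ = 0) : y = ⟪J T, y⟫ • J T := by
  refine ext_inner_right ℝ fun z => ?_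
  have := o.inner_mul_inner_add_areaForm_mul_areaForm T y z
  rw [hT, hy] at this
  rw [real_inner_smul_left, o.inner_rightAngleRotation_left, o.inner_rightAngleRotation_left]
  linarith

theorem norm_sq_eq_inner_sq_add_inner_rightAngleRotation_sq {T : E} (hT : ‖T‖ = 1) (w : E) :
    ‖w‖ ^ 2 = ⟪T, w⟫ ^ 2 + ⟪J T, w⟫ ^ 2 := by
  rw [o.inner_rightAngleRotation_left, o.inner_sq_add_areaForm_sq, hT]
  ring

theorem eq_inner_smul_of_eq_rightAngleRotation {T N : ℝ → E} {A : E} {s : ℝ}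
    (hT : ∀ t, ‖T t‖ = 1) (hA : HasDerivAt T A s) (hN : ∀ t, N t = J (T t)) :
    A = ⟪A, N s⟫ • N s := by
  rw [hN, real_inner_comm]
  exact o.eq_inner_rightAngleRotation_smul_of_inner_eq_zero (hT s) (hA.inner_eq_zero_of_norm_eq hT)

theorem hasDerivAt_of_eq_rightAngleRotation {T N : ℝ → E} {A : E} {s : ℝ}
    (hT : ∀ t, ‖T t‖ = 1) (hA : HasDerivAt T A s) (hN : ∀ t, N t = J (T t)) :
    HasDerivAt N (-⟪A, N s⟫ • T s) s := by
  rw [show N = fun t => J (T t) from funext hN]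
  refine (o.rightAngleRotation.toContinuousLinearEquiv.hasFDerivAt.comp_hasDerivAt s
    hA).congr_deriv ?_
  conv_lhs => rw [o.eq_inner_smul_of_eq_rightAngleRotation hT hA hN, hN]
  simp

theorem norm_sub_one_div_smul_le_of_eq_rightAngleRotation {T N w : E} {l : ℝ} (hT : ‖T‖ = 1)
    (hN : N = J T) (hl : 0 < l) (h : (l * ⟪w, N⟫ - 1) ^ 2 + (l * ⟪w, T⟫) ^ 2 ≤ 1) :
    ‖w - (1 / l) • N‖ ≤ 1 / l := by
  subst hN
  have hsq : (l * ‖w - (1 / l) • J T‖) ^ 2 ≤ 1 := by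
    rw [mul_pow, o.norm_sq_eq_inner_sq_add_inner_rightAngleRotation_sq hT]
    have hTJT : ⟪T, J T⟫ = 0 := by simp
    have hJT : ⟪J T, J T⟫ = 1 := by simp [hT]
    rw [inner_sub_right, inner_sub_right, inner_smul_right, inner_smul_right, hTJT, hJT,
      real_inner_comm w, real_inner_comm w]
    convert h using 1
    field_simp
    ring
  rw [le_div_iff₀ hl, mul_comm]
  exact (pow_le_one_iff_of_nonneg (by positivity) two_ne_zero).1 hsq

end Orientation

theorem exists_orientation_eq_rightAngleRotation {T A N : ℝ → E} (hTc : Continuous T)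
    (hAc : Continuous A) (hT : ∀ s, ‖T s‖ = 1) (hN : ∀ s, ‖N s‖ = 1) (hTN : ∀ s, ⟪T s, N s⟫ = 0)
    (hTA : ∀ s, ⟪T s, A s⟫ = 0) (hAN : ∀ s, 0 < ⟪A s, N s⟫) :
    ∃ o : Orientation ℝ E (Fin 2), ∀ s, N s = o.rightAngleRotation (T s) := by
  have := FiniteDimensional.of_fact_finrank_eq_two (K := ℝ) (V := E)
  let o₀ : Orientation ℝ E (Fin 2) := (finBasisOfFinrankEq ℝ E Fact.out).orientation
  set δ : ℝ → ℝ := fun s => ⟪o₀.rightAngleRotation (T s), N s⟫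
  set c : ℝ → ℝ := fun s => ⟪o₀.rightAngleRotation (T s), A s⟫
  have hN_eq s : N s = δ s • o₀.rightAngleRotation (T s) :=
    o₀.eq_inner_rightAngleRotation_smul_of_inner_eq_zero (hT s) (hTN s)
  have hA_eq s : A s = c s • o₀.rightAngleRotation (T s) :=
    o₀.eq_inner_rightAngleRotation_smul_of_inner_eq_zero (hT s) (hTA s)
  have hδ_sq s : δ s ^ 2 = 1 := by
    have := o₀.norm_sq_eq_inner_sq_add_inner_rightAngleRotation_sq (hT s) (N s)
    rw [hN, hTN] at this
    linarith
  have hcδ s : 0 < c s * δ s := by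
    have h := hAN s
    rwa [hA_eq, hN_eq, inner_smul_left, inner_smul_right, real_inner_self_eq_norm_sq,
      LinearIsometryEquiv.norm_map, hT, one_pow, mul_one, conj_trivial] at h
  -- the sign of `δ` is that of the signed curvature `c`, which is continuous and never zero
  have hδ_eq : δ = fun s => c s / |c s| := funext fun s => by
    have hδ_abs : |δ s| = 1 :=
      (pow_eq_one_iff_of_nonneg (abs_nonneg _) two_ne_zero).1 (by rw [sq_abs, hδ_sq])
    rw [← mul_one |c s|, ← hδ_abs, ← abs_mul, abs_of_pos (hcδ s), eq_div_iff (hcδ s).ne']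
    linear_combination c s * hδ_sq s
  have hsq : EqOn (δ ^ 2) 1 univ := fun s _ => hδ_sq s
  have hδc : Continuous δ := by
    have hc : Continuous c := (o₀.rightAngleRotation.continuous.comp hTc).inner hAc
    rw [hδ_eq]
    exact hc.div hc.abs fun s => abs_ne_zero.2 (left_ne_zero_of_mul (hcδ s).ne')
  rcases isPreconnected_univ.eq_one_or_eq_neg_one_of_sq_eq hδc.continuousOn hsq with h | h
  · refine ⟨o₀, fun s => ?_⟩
    rw [hN_eq s, show δ s = 1 from h (mem_univ s), one_smul]
  · refine ⟨-o₀, fun s => ?_⟩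
    rw [hN_eq s, show δ s = -1 from h (mem_univ s),
      o₀.rightAngleRotation_neg_orientation, neg_one_smul]

end PlaneFrame

theorem HasDerivAt.arg_ofReal_add_ofReal_mul_I {a b : ℝ → ℝ} {a' b' t : ℝ}
    (ha : HasDerivAt a a' t) (hb : HasDerivAt b b' t) (hz : (a t + b t * I : ℂ) ∈ slitPlane) :
    HasDerivAt (fun s => arg (a s + b s * I)) ((a t * b' - b t * a') / (a t ^ 2 + b t ^ 2)) t := by
  have hlog := (ha.ofReal_comp.add (hb.ofReal_comp.mul_const I)).clog_real hz
  have h := imCLM.hasFDerivAt.comp_hasDerivAt t hlog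
  simp only [Function.comp_def, Pi.add_apply, imCLM_apply, log_im] at h
  refine h.congr_deriv ?_
  simp [div_im, normSq]
  ring

theorem Continuous.exists_Ioo_forall_lt_of_lt {f : ℝ → ℝ} (hf : Continuous f) {c t₀ : ℝ}
    (ht₀ : c < f t₀) (hleft : ∃ t ≤ t₀, f t ≤ c) (hright : ∃ t ≥ t₀, f t ≤ c) :
    ∃ t₁ t₂, t₁ < t₀ ∧ t₀ < t₂ ∧ f t₁ ≤ c ∧ f t₂ ≤ c ∧ ∀ s ∈ Ioo t₁ t₂, c < f s := by
  set B := Iic t₀ ∩ f ⁻¹' Iic c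
  set A := Ici t₀ ∩ f ⁻¹' Iic c
  have hB : sSup B ∈ B := (isClosed_Iic.inter (isClosed_Iic.preimage hf)).csSup_mem hleft
    ⟨t₀, fun _ h => h.1⟩
  have hA : sInf A ∈ A := (isClosed_Ici.inter (isClosed_Iic.preimage hf)).csInf_mem hright
    ⟨t₀, fun _ h => h.1⟩
  refine ⟨sSup B, sInf A, hB.1.lt_of_ne ?_, hA.1.lt_of_ne' ?_, hB.2, hA.2, fun s hs => ?_⟩
  · rintro h; exact ht₀.not_ge (h ▸ hB.2)
  · rintro h; exact ht₀.not_ge (h ▸ hA.2)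
  by_contra! hfs
  rcases le_total s t₀ with h | h
  · exact hs.1.not_ge (le_csSup ⟨t₀, fun _ h => h.1⟩ ⟨h, hfs⟩)
  · exact hs.2.not_ge (csInf_le ⟨t₀, fun _ h => h.1⟩ ⟨h, hfs⟩)

section RollingSystem

variable {a b κ : ℝ → ℝ} {l : ℝ}

theorem arg_add_mul_le_arg (ha : ∀ r, HasDerivAt a (-(κ r * b r)) r)
    (hb : ∀ r, HasDerivAt b (κ r * (a r + 1) - l) r) (hκ : ∀ r, l ≤ κ r) (ha1 : ∀ r, -1 ≤ a r)
    {s t : ℝ} (hst : s ≤ t) (hP : ∀ r ∈ Icc s t, 1 < a r ^ 2 + b r ^ 2) :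
    arg (a s + b s * I) + l * (t - s) ≤ arg (a t + b t * I) := by
  have hθ : ∀ r ∈ Icc s t, ∃ θ', HasDerivAt (fun r => arg (a r + b r * I)) θ' r ∧ l ≤ θ' := by
    intro r hr
    have hP := hP r hr
    have hslit : (a r : ℂ) + b r * I ∈ slitPlane := by
      rw [mem_slitPlane_iff]
      simp only [add_re, ofReal_re, mul_re, I_re, mul_zero, ofReal_im, I_im, mul_one, sub_self,
        add_zero, add_im, mul_im, zero_add, ne_eq]
      by_contra! h
      nlinarith [ha1 r]
    refine ⟨_, (ha r).arg_ofReal_add_ofReal_mul_I (hb r) hslit, ?_⟩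
    have hsum : 0 ≤ a r + (a r ^ 2 + b r ^ 2) := by linarith [ha1 r]
    rw [le_div_iff₀ (by linarith)]
    nlinarith [mul_nonneg (sub_nonneg.2 (hκ r)) hsum]
  choose! θ' hθ' hlθ' using hθ
  have := (convex_Icc s t).mul_sub_le_image_sub_of_le_deriv
    (fun r hr => (hθ' r hr).continuousAt.continuousWithinAt)
    (fun r hr => (hθ' r (interior_subset hr)).differentiableAt.differentiableWithinAt)
    (fun r hr => (hθ' r (interior_subset hr)).deriv ▸ hlθ' r (interior_subset hr))
    s (left_mem_Icc.2 hst) t (right_mem_Icc.2 hst) hst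
  linarith

theorem exists_mem_Icc_sq_add_sq_le_one (hl : 0 < l) (ha : ∀ r, HasDerivAt a (-(κ r * b r)) r)
    (hb : ∀ r, HasDerivAt b (κ r * (a r + 1) - l) r) (hκ : ∀ r, l ≤ κ r) (ha1 : ∀ r, -1 ≤ a r)
    (s : ℝ) : ∃ t ∈ Icc s (s + 2 * π / l), a t ^ 2 + b t ^ 2 ≤ 1 := by
  by_contra! h
  have hgrow := arg_add_mul_le_arg ha hb hκ ha1 (le_add_of_nonneg_right (by positivity)) h
  rw [add_sub_cancel_left, mul_div_cancel₀ _ hl.ne'] at hgrow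
  linarith [neg_pi_lt_arg (a s + b s * I), arg_le_pi (a (s + 2 * π / l) + b (s + 2 * π / l) * I)]

theorem sq_add_sq_le_one_of_hasDerivAt (hl : 0 < l) (ha : ∀ r, HasDerivAt a (-(κ r * b r)) r)
    (hb : ∀ r, HasDerivAt b (κ r * (a r + 1) - l) r) (hκ : ∀ r, l ≤ κ r) (ha1 : ∀ r, -1 ≤ a r)
    (t₀ : ℝ) : a t₀ ^ 2 + b t₀ ^ 2 ≤ 1 := by
  set P : ℝ → ℝ := fun r => a r ^ 2 + b r ^ 2
  have hP r : HasDerivAt P (2 * (κ r - l) * b r) r :=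
    (((ha r).pow 2).add ((hb r).pow 2)).congr_deriv (by ring)
  have hPc : Continuous P := continuous_iff_continuousAt.2 fun r => (hP r).continuousAt
  by_contra! h₀
  obtain ⟨s₁, hs₁, hPs₁⟩ := exists_mem_Icc_sq_add_sq_le_one hl ha hb hκ ha1 (t₀ - 2 * π / l)
  obtain ⟨s₂, hs₂, hPs₂⟩ := exists_mem_Icc_sq_add_sq_le_one hl ha hb hκ ha1 t₀
  obtain ⟨t₁, t₂, h₁, h₂, hP₁, hP₂, hmid⟩ := hPc.exists_Ioo_forall_lt_of_lt h₀
    ⟨s₁, hs₁.2.trans_eq (sub_add_cancel _ _), hPs₁⟩ ⟨s₂, hs₂.1, hPs₂⟩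
  -- `P'` has the sign of `b`, and `arg` has the sign of `b` but increases on `(t₁, t₂)`
  obtain ⟨ξ, hξ, hPξ⟩ := exists_hasDerivAt_eq_slope P _ h₁ hPc.continuousOn fun r _ => hP r
  obtain ⟨ξ', hξ', hPξ'⟩ := exists_hasDerivAt_eq_slope P _ h₂ hPc.continuousOn fun r _ => hP r
  have hbξ : 0 < b ξ := pos_of_mul_pos_right (hPξ ▸ div_pos (by linarith) (by linarith))
    (by linarith [hκ ξ])
  have hbξ' : b ξ' < 0 := neg_of_mul_neg_right (hPξ' ▸ div_neg_of_neg_of_pos (by linarith)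
    (by linarith)) (by linarith [hκ ξ'])
  have hgrow := arg_add_mul_le_arg ha hb hκ ha1 (hξ.2.trans hξ'.1).le
    fun r hr => hmid r ⟨hξ.1.trans_le hr.1, hr.2.trans_lt hξ'.2⟩
  have hargξ : 0 ≤ arg (a ξ + b ξ * I) := arg_nonneg_iff.2 (by simpa using hbξ.le)
  have hargξ' : arg (a ξ' + b ξ' * I) < 0 := arg_neg_iff.2 (by simpa using hbξ')
  nlinarith [mul_pos hl (sub_pos.2 (hξ.2.trans hξ'.1))]

end RollingSystem

theorem blaschke_rolling_A_plane_general
    (D : Set (EuclideanSpace ℝ (Fin 2)))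
    (γ N : ℝ → EuclideanSpace ℝ (Fin 2))
    (hγ : ContDiff ℝ 2 γ)
    (hunit : ∀ s, ‖deriv γ s‖ = 1)
    (hNunit : ∀ s, ‖N s‖ = 1)
    (hNorth : ∀ s, ⟪deriv γ s, N s⟫ = 0)
    (hNinner : ∀ s, ∀ x ∈ D, 0 ≤ ⟪x - γ s, N s⟫)
    (l : ℝ) (hl : 0 < l)
    (hcurv : ∀ s, l ≤ ⟪deriv (deriv γ) s, N s⟫) :
    ∀ s : ℝ, D ⊆ Metric.closedBall (γ s + (1 / l) • N s) (1 / l) := by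
  have : Fact (finrank ℝ (EuclideanSpace ℝ (Fin 2)) = 2) := ⟨finrank_euclideanSpace_fin⟩
  have hT' : ContDiff ℝ 1 (deriv γ) := hγ.deriv' (n := 1)
  have hγ' s : HasDerivAt γ (deriv γ s) s := (hγ.differentiable two_ne_zero s).hasDerivAt
  have hγ'' s : HasDerivAt (deriv γ) (deriv (deriv γ) s) s :=
    (hT'.differentiable one_ne_zero s).hasDerivAt
  obtain ⟨o, hNJ⟩ := exists_orientation_eq_rightAngleRotation hT'.continuous
    (hT'.continuous_deriv le_rfl) hunit hNunit hNorth
    (fun s => (hγ'' s).inner_eq_zero_of_norm_eq hunit) fun s => hl.trans_le (hcurv s)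
  have hT s : HasDerivAt (deriv γ) (⟪deriv (deriv γ) s, N s⟫ • N s) s :=
    o.eq_inner_smul_of_eq_rightAngleRotation hunit (hγ'' s) hNJ ▸ hγ'' s
  have hN s := o.hasDerivAt_of_eq_rightAngleRotation hunit (hγ'' s) hNJ
  intro s x hx
  rw [Metric.mem_closedBall, dist_eq_norm, ← sub_sub]
  refine o.norm_sub_one_div_smul_le_of_eq_rightAngleRotation (hunit s) (hNJ s) hl ?_
  refine sq_add_sq_le_one_of_hasDerivAt (a := fun t => l * ⟪x - γ t, N t⟫ - 1)
    (b := fun t => l * ⟪x - γ t, deriv γ t⟫) hl (fun t => ?_) (fun t => ?_) hcurv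
    (fun t => by nlinarith [hNinner t x hx]) s
  · exact (((hasDerivAt_inner_sub_normal x (hγ' t) (hN t) (hNorth t)).const_mul l).sub_const
      1).congr_deriv (by ring)
  · exact ((hasDerivAt_inner_sub_tangent x (hγ' t) (hT t) (hunit t)).const_mul l).congr_deriv
      (by ring)

/-- Blaschke's Rolling Theorem, part A, plane version with explicit boundary curve:
if the frontier of a compact convex plane set `D` is traced by a unit-speed C² curve
`γ` with inner unit normal `N` and curvature `⟪γ''(s), N(s)⟫ ≥ l > 0`, then `D` is
contained in the closed disc of radius `1/l` centered at `γ(s) + (1/l)·N(s)`. -/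
theorem blaschke_rolling_A_plane
    (D : Set (EuclideanSpace ℝ (Fin 2)))
    (hDcompact : IsCompact D) (hDconv : Convex ℝ D) (hDint : (interior D).Nonempty)
    (γ N : ℝ → EuclideanSpace ℝ (Fin 2))
    (hγ : ContDiff ℝ 2 γ) (hγD : frontier D = Set.range γ)
    (hunit : ∀ s, ‖deriv γ s‖ = 1)
    (hNunit : ∀ s, ‖N s‖ = 1)
    (hNorth : ∀ s, ⟪deriv γ s, N s⟫ = 0)
    (hNinner : ∀ s, ∀ x ∈ D, 0 ≤ ⟪x - γ s, N s⟫)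
    (l : ℝ) (hl : 0 < l)
    (hcurv : ∀ s, l ≤ ⟪deriv (deriv γ) s, N s⟫) :
    ∀ s : ℝ, D ⊆ Metric.closedBall (γ s + (1 / l) • N s) (1 / l) :=
  blaschke_rolling_A_plane_general D γ N hγ hunit hNunit hNorth hNinner l hl hcurv
end

section
/- (Blaschke's Rolling Theorem, part B, plane version with explicit boundary curve.) Let D ⊆ ℝ² be a compact convex set with nonempty interior whose frontier is the image of a twice continuously differentiable curve γ : ℝ → ℝ² with ‖γ'(s)‖ = 1 for all s, and let N : ℝ → ℝ² satisfy, for every s: ‖N(s)‖ = 1, ⟨γ'(s), N(s)⟩ = 0, and ⟨x − γ(s), N(s)⟩ ≥ 0 for all x ∈ D (so N is the inner unit normal along γ). Suppose λ > 0 and the signed curvature with respect to N satisfies 0 < ⟨γ''(s), N(s)⟩ ≤ λ for all s. Then for every s, the closed ball of radius 1/λ centered at γ(s) + (1/λ)·N(s) is contained in D. -/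
/-!
Since `‖γ'‖ = 1`, the acceleration is `γ'' = κ N` with `κ = ⟪γ'', N⟫ > 0`, so `N = γ'' / ‖γ''‖` is
continuous and, for a suitable orientation, `N = J γ'` where `J` is the rotation by a right angle.
Hence `N' = -κ γ'`, and `γ'` is the rotation of `γ' s` by the turning angle `θ = ∫ₛ κ`.

For `c = γ s + N s / l` the function `F = ⟪c - γ, N⟫ - 1/l` satisfies, in the variable `θ`,
`F'' + F = 1/κ - 1/l ≥ 0` with `F = F' = 0` at `s`; comparison with `sin` gives `F ≥ 0` as long as
`|θ t - θ s| ≤ π`. Since `γ` is bounded, `θ` is onto `ℝ`, so every normal `N t` is also the normal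
`N t'` at some `t'` of that range, and both `γ t` and `γ t'` lie on the same supporting line.
Thus the disc of radius `1/l` about `c` lies on the inner side of every supporting line of `D`,
and a compact convex body with a `C¹` boundary is the intersection of these half-planes.
-/

open Module Set Filter Topology Bornology
open scoped Real RealInnerProductSpace

section InnerProductSpace

variable {E : Type*} [NormedAddCommGroup E] [InnerProductSpace ℝ E]

theorem HasDerivAt.inner_self_eq_zero_of_norm_eq {T : ℝ → E} {T' : E} {u r : ℝ}
    (hT : HasDerivAt T T' u) (hnorm : ∀ v, ‖T v‖ = r) : ⟪T', T u⟫ = 0 := by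
  have hconst : (fun v => ⟪T v, T v⟫) = fun _ => r ^ 2 := by
    funext v; rw [real_inner_self_eq_norm_sq, hnorm]
  have h := (hT.inner ℝ hT).unique (hconst ▸ hasDerivAt_const u (r ^ 2))
  rw [real_inner_comm] at h
  linarith

theorem continuous_of_forall_eq_pos_smul {X : Type*} [TopologicalSpace X] {A N : X → E}
    {κ : X → ℝ} (hA : Continuous A) (hκ : ∀ x, 0 < κ x) (hN : ∀ x, ‖N x‖ = 1)
    (h : ∀ x, A x = κ x • N x) : Continuous N := by
  have hAN : N = fun x => ‖A x‖⁻¹ • A x := funext fun x => by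
    rw [h, norm_smul, hN, mul_one, Real.norm_of_nonneg (hκ x).le, inv_smul_smul₀ (hκ x).ne']
  rw [hAN]
  exact (hA.norm.inv₀ fun x => by simp [h, norm_smul, hN, (hκ x).ne']).smul hA

theorem Bornology.IsBounded.eq_zero_of_tendsto_deriv_atTop {γ γ' : ℝ → E}
    (hb : IsBounded (range γ)) (hγ : ∀ u, HasDerivAt γ (γ' u) u) {v : E}
    (hv : Tendsto γ' atTop (𝓝 v)) : v = 0 := by
  by_contra hv0
  set c := ‖v‖ ^ 2 / 2
  have hc : 0 < c := by positivity
  have hf : ∀ u, HasDerivAt (fun u => ⟪v, γ u⟫) ⟪v, γ' u⟫ u := fun u =>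
    (HasDerivAt.inner ℝ (hasDerivAt_const u v) (hγ u)).congr_deriv (by simp)
  have hlim : Tendsto (fun u => ⟪v, γ' u⟫) atTop (𝓝 (‖v‖ ^ 2)) := by
    simpa [real_inner_self_eq_norm_sq] using (tendsto_const_nhds (x := v)).inner (𝕜 := ℝ) hv
  obtain ⟨S, hS⟩ := eventually_atTop.mp
    (hlim.eventually (eventually_ge_nhds (half_lt_self (by positivity))))
  have hgrow : ∀ u ≥ S, c * (u - S) ≤ ⟪v, γ u⟫ - ⟪v, γ S⟫ := fun u hu =>
    (convex_Ici S).mul_sub_le_image_sub_of_le_deriv (C := c)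
      (continuous_iff_continuousAt.2 fun u => (hf u).continuousAt).continuousOn
      (fun u _ => (hf u).differentiableAt.differentiableWithinAt)
      (fun x hx => by rw [interior_Ici] at hx; rw [(hf x).deriv]; exact hS x hx.le)
      S self_mem_Ici u hu hu
  obtain ⟨R, hR⟩ := hb.exists_norm_le
  have hM : ∀ u, |⟪v, γ u⟫| ≤ ‖v‖ * R := fun u =>
    (abs_real_inner_le_norm v (γ u)).trans
      (mul_le_mul_of_nonneg_left (hR _ (mem_range_self u)) (norm_nonneg v))
  have hR0 : 0 ≤ ‖v‖ * R := (abs_nonneg _).trans (hM S)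
  have h := hgrow (S + (2 * (‖v‖ * R) + 1) / c) (le_add_of_nonneg_right (by positivity))
  rw [add_sub_cancel_left, mul_div_cancel₀ _ hc.ne'] at h
  linarith [abs_le.mp (hM S), abs_le.mp (hM (S + (2 * (‖v‖ * R) + 1) / c))]

theorem Bornology.IsBounded.eq_zero_of_tendsto_deriv_atBot {γ γ' : ℝ → E}
    (hb : IsBounded (range γ)) (hγ : ∀ u, HasDerivAt γ (γ' u) u) {v : E}
    (hv : Tendsto γ' atBot (𝓝 v)) : v = 0 := by
  have h := (hb.subset (range_comp_subset_range (fun u : ℝ => -u) γ)).eq_zero_of_tendsto_deriv_atTop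
    (γ' := fun u => -γ' (-u))
    (fun u => ((hγ (-u)).scomp u (hasDerivAt_neg u)).congr_deriv (neg_one_smul ℝ _))
    ((hv.comp tendsto_neg_atTop_atBot).neg)
  exact neg_eq_zero.mp h

/-- In the variable `θ` (with `dθ = κ du`) the hypotheses say `F'' + F = ρ / κ ≥ 0` and
`F = F' = 0` at `s`; then `F ≥ 0` for `|θ - θ s| ≤ π`, since
`P = F cos (θ t - θ) - g sin (θ t - θ)` has `P' = ρ sin (θ t - θ)`. -/
theorem sturm_comparison_nonneg {F g θ κ ρ : ℝ → ℝ} (hF : ∀ u, HasDerivAt F (-(κ u * g u)) u)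
    (hg : ∀ u, HasDerivAt g (κ u * F u - ρ u) u) (hθ : ∀ u, HasDerivAt θ (κ u) u)
    (hκ : ∀ u, 0 ≤ κ u) (hρ : ∀ u, 0 ≤ ρ u) {s t : ℝ} (hFs : F s = 0) (hgs : g s = 0)
    (hst : |θ t - θ s| ≤ π) : 0 ≤ F t := by
  have hmono : Monotone θ := monotone_of_hasDerivAt_nonneg hθ hκ
  set P : ℝ → ℝ := fun u => F u * Real.cos (θ t - θ u) - g u * Real.sin (θ t - θ u)
  have hP : ∀ u, HasDerivAt P (ρ u * Real.sin (θ t - θ u)) u := fun u => by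
    have hα : HasDerivAt (fun u => θ t - θ u) (-κ u) u := (hθ u).const_sub _
    refine HasDerivAt.congr_deriv (f := P) (((hF u).mul hα.cos).sub ((hg u).mul hα.sin)) ?_
    ring
  have hPc : ContinuousOn P univ :=
    (continuous_iff_continuousAt.2 fun u => (hP u).continuousAt).continuousOn
  have hPs : P s = 0 := by simp [P, hFs, hgs]
  have hPt : P t = F t := by simp [P]
  rw [← hPt, ← hPs]
  rcases le_total s t with hst' | hts
  · refine monotoneOn_of_hasDerivWithinAt_nonneg (convex_Icc s t) (hPc.mono (subset_univ _))
      (fun u _ => (hP u).hasDerivWithinAt) (fun u hu => ?_) (left_mem_Icc.2 hst')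
      (right_mem_Icc.2 hst') hst'
    rw [interior_Icc] at hu
    have := hmono hu.1.le
    exact mul_nonneg (hρ u) (Real.sin_nonneg_of_nonneg_of_le_pi (sub_nonneg.2 (hmono hu.2.le))
      (by linarith [le_abs_self (θ t - θ s)]))
  · refine antitoneOn_of_hasDerivWithinAt_nonpos (convex_Icc t s) (hPc.mono (subset_univ _))
      (fun u _ => (hP u).hasDerivWithinAt) (fun u hu => ?_) (left_mem_Icc.2 hts)
      (right_mem_Icc.2 hts) hts
    rw [interior_Icc] at hu
    have := hmono hu.2.le
    exact mul_nonpos_of_nonneg_of_nonpos (hρ u) (Real.sin_nonpos_of_nonpos_of_neg_pi_le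
      (sub_nonpos.2 (hmono hu.1.le)) (by linarith [neg_abs_le (θ t - θ s)]))

theorem one_div_le_inner_of_abs_sub_le_pi {γ T N : ℝ → E} {κ θ : ℝ → ℝ} {l : ℝ}
    (hγ : ∀ u, HasDerivAt γ (T u) u) (hT : ∀ u, HasDerivAt T (κ u • N u) u)
    (hN : ∀ u, HasDerivAt N (-κ u • T u) u) (hTunit : ∀ u, ‖T u‖ = 1)
    (horth : ∀ u, ⟪T u, N u⟫ = 0) (hθ : ∀ u, HasDerivAt θ (κ u) u) (hκ : ∀ u, 0 ≤ κ u)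
    (hκl : ∀ u, κ u ≤ l) {s t : ℝ} (hNs : ‖N s‖ = 1) (hst : |θ t - θ s| ≤ π) :
    1 / l ≤ ⟪γ s + (1 / l) • N s - γ t, N t⟫ := by
  set c := γ s + (1 / l) • N s
  have hc : ∀ u, HasDerivAt (fun u => c - γ u) (-T u) u := fun u => (hγ u).const_sub c
  have hcs : c - γ s = (1 / l) • N s := by simp [c]
  have := sturm_comparison_nonneg (F := fun u => ⟪c - γ u, N u⟫ - 1 / l)
    (g := fun u => ⟪c - γ u, T u⟫)
    (ρ := fun u => 1 - κ u / l) (fun u => ?_) (fun u => ?_) hθ hκ (fun u => ?_) ?_ ?_ hst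
  · linarith
  · refine (((hc u).inner ℝ (hN u)).sub_const _).congr_deriv ?_
    simp [inner_smul_right, real_inner_comm, horth]
  · refine ((hc u).inner ℝ (hT u)).congr_deriv ?_
    simp only [inner_neg_left, real_inner_self_eq_norm_sq, hTunit, inner_smul_right]
    ring
  · exact sub_nonneg.2 (div_le_one_of_le₀ (hκl u) ((hκ u).trans (hκl u)))
  · simp [hcs, inner_smul_left, hNs]
  · simp [hcs, inner_smul_left, real_inner_comm, horth]

theorem inner_sub_nonneg_of_mem_closedBall {c p n z : E} {r : ℝ} (hn : ‖n‖ = 1)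
    (h : r ≤ ⟪c - p, n⟫) (hz : z ∈ Metric.closedBall c r) : 0 ≤ ⟪z - p, n⟫ := by
  have hzc := abs_real_inner_le_norm (z - c) n
  rw [hn, mul_one, ← dist_eq_norm] at hzc
  rw [show z - p = (z - c) + (c - p) by abel, inner_add_left]
  linarith [neg_abs_le ⟪z - c, n⟫, Metric.mem_closedBall.mp hz]

end InnerProductSpace

section Convex

variable {E : Type*} [NormedAddCommGroup E] [NormedSpace ℝ E]

theorem StrongDual.eq_zero_of_isMinOn_of_mem_interior {f : StrongDual ℝ E} {D : Set E} {y : E}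
    (hmin : IsMinOn f D y) (hy : y ∈ interior D) : f = 0 :=
  (hmin.isLocalMin (mem_interior_iff_mem_nhds.mp hy)).hasFDerivAt_eq_zero f.hasFDerivAt

theorem IsCompact.exists_isMinOn_frontier_lt {D : Set E} (hD : IsCompact D) (hconv : Convex ℝ D)
    (hne : D.Nonempty) {x : E} (hx : x ∉ D) :
    ∃ f : StrongDual ℝ E, ∃ y ∈ frontier D, IsMinOn f D y ∧ f x < f y := by
  obtain ⟨f, u, hfx, hfD⟩ := geometric_hahn_banach_point_closed hconv hD.isClosed hx
  obtain ⟨y, hyD, hmin⟩ := hD.exists_isMinOn hne f.continuous.continuousOn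
  have hxy : f x < f y := hfx.trans (hfD y hyD)
  refine ⟨f, y, ⟨subset_closure hyD, fun hy => ?_⟩, hmin, hxy⟩
  simp [StrongDual.eq_zero_of_isMinOn_of_mem_interior hmin hy] at hxy

end Convex

section TwoDim

variable {E : Type*} [NormedAddCommGroup E] [InnerProductSpace ℝ E] [Fact (finrank ℝ E = 2)]

theorem exists_orthonormalBasis_eq_pair {e₀ e₁ : E} (h : Orthonormal ℝ ![e₀, e₁]) :
    ∃ b : OrthonormalBasis (Fin 2) ℝ E, ⇑b = ![e₀, e₁] :=
  ⟨(basisOfOrthonormalOfCardEqFinrank h (by simpa using (Fact.out : finrank ℝ E = 2).symm)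
    ).toOrthonormalBasis (by simpa using h), by simp⟩

theorem inner_smul_add_inner_smul_eq {e₀ e₁ : E} (h : Orthonormal ℝ ![e₀, e₁]) (w : E) :
    ⟪e₀, w⟫ • e₀ + ⟪e₁, w⟫ • e₁ = w := by
  obtain ⟨b, hb⟩ := exists_orthonormalBasis_eq_pair h
  simpa [Fin.sum_univ_two, hb] using b.sum_repr' w

theorem exists_orientation_rightAngleRotation_eq {e₀ e₁ : E} (h : Orthonormal ℝ ![e₀, e₁]) :
    ∃ o : Orientation ℝ E (Fin 2), o.rightAngleRotation e₀ = e₁ := by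
  obtain ⟨b, hb⟩ := exists_orthonormalBasis_eq_pair h
  set o := b.toBasis.orientation
  refine ⟨o, (inner_eq_one_iff_of_norm_eq_one (𝕜 := ℝ) (by simpa using h.norm_eq_one 0)
    (by simpa using h.norm_eq_one 1)).mp ?_⟩
  rw [o.inner_rightAngleRotation_left, o.areaForm_to_volumeForm, o.volumeForm_robust b rfl]
  simpa [hb] using b.toBasis.det_self

theorem HasDerivAt.eq_inner_smul_of_norm_eq_one {T N : ℝ → E} {T' : E} {u : ℝ}
    (hT : HasDerivAt T T' u) (hTunit : ∀ v, ‖T v‖ = 1) (hN : ‖N u‖ = 1)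
    (horth : ⟪T u, N u⟫ = 0) : T' = ⟪T', N u⟫ • N u := by
  have h := inner_smul_add_inner_smul_eq
    (by simp [hTunit u, hN, horth] : Orthonormal ℝ ![T u, N u]) T'
  rw [real_inner_comm, hT.inner_self_eq_zero_of_norm_eq hTunit, zero_smul, zero_add,
    real_inner_comm] at h
  exact h.symm

theorem Orientation.eq_rightAngleRotation_of_continuous (o : Orientation ℝ E (Fin 2))
    {X : Type*} [TopologicalSpace X] [PreconnectedSpace X] {T N : X → E} (hT : Continuous T)
    (hN : Continuous N) (hTunit : ∀ x, ‖T x‖ = 1) (hNunit : ∀ x, ‖N x‖ = 1)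
    (horth : ∀ x, ⟪T x, N x⟫ = 0) {x₀ : X} (h₀ : N x₀ = o.rightAngleRotation (T x₀)) (x : X) :
    N x = o.rightAngleRotation (T x) := by
  have hsq : ∀ x, ⟪o.rightAngleRotation (T x), N x⟫ ^ 2 = 1 ^ 2 := fun x => by
    have := o.inner_sq_add_areaForm_sq (T x) (N x)
    rw [horth, hTunit, hNunit] at this
    rw [o.inner_rightAngleRotation_left]; linarith
  have h := isPreconnected_univ.eq_of_sq_eq
    ((o.rightAngleRotation.continuous.comp hT).inner hN).continuousOn continuousOn_const
    (fun x _ => hsq x) (fun _ => one_ne_zero) (mem_univ x₀)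
    (by simp [h₀, hTunit]) (mem_univ x)
  exact ((inner_eq_one_iff_of_norm_eq_one (𝕜 := ℝ) (by simp [hTunit]) (hNunit x)).mp h).symm

theorem Orientation.eq_rotation_of_hasDerivAt (o : Orientation ℝ E (Fin 2)) {T : ℝ → E}
    {κ θ : ℝ → ℝ} (hT : ∀ u, HasDerivAt T (κ u • o.rightAngleRotation (T u)) u)
    (hθ : ∀ u, HasDerivAt θ (κ u) u) {s : ℝ} (hθs : θ s = 0) (u : ℝ) :
    T u = o.rotation (θ u) (T s) := by
  set R : ℝ → E := fun v => Real.cos (θ v) • T s + Real.sin (θ v) • o.rightAngleRotation (T s)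
  have hR : ∀ v, HasDerivAt R (κ v • o.rightAngleRotation (R v)) v := fun v => by
    refine HasDerivAt.congr_deriv (f := R)
      (((hθ v).cos.smul_const (T s)).add ((hθ v).sin.smul_const (o.rightAngleRotation (T s)))) ?_
    simp only [R, map_add, map_smul, o.rightAngleRotation_rightAngleRotation]
    module
  -- `‖T - R‖²` is constant, its derivative being `2κ ⟪T - R, J (T - R)⟫ = 0`
  have hE : ∀ v, HasDerivAt (fun v => ‖T v - R v‖ ^ 2) 0 v := fun v => by
    refine HasDerivAt.congr_deriv (f := fun v => ‖T v - R v‖ ^ 2)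
      ((hT v).sub (hR v)).norm_sq ?_
    rw [← smul_sub, ← map_sub, inner_smul_right, real_inner_comm, Pi.sub_apply,
      o.inner_rightAngleRotation_self, mul_zero, mul_zero]
  have := is_const_of_deriv_eq_zero (fun v => (hE v).differentiableAt) (fun v => (hE v).deriv) u s
  simpa [R, hθs, sub_eq_zero, o.rotation_apply] using this

theorem Orientation.surjective_of_hasDerivAt_rotation (o : Orientation ℝ E (Fin 2)) {γ : ℝ → E}
    {θ : ℝ → ℝ} {e : E} (he : e ≠ 0) (hγ : ∀ u, HasDerivAt γ (o.rotation (θ u) e) u)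
    (hb : IsBounded (range γ)) (hθ : Monotone θ) (hθc : Continuous θ) : Function.Surjective θ := by
  have hrot : Continuous fun a : ℝ => o.rotation a e := by
    simp only [o.rotation_apply, Real.Angle.cos_coe, Real.Angle.sin_coe]
    fun_prop
  have hne : ∀ a : ℝ, o.rotation a e ≠ 0 := fun a => by simpa using he
  refine hθc.surjective (tendsto_atTop_atTop_of_monotone' hθ fun hbdd => hne (⨆ u, θ u) ?_)
    (tendsto_atBot_atBot_of_monotone' hθ fun hbdd => hne (⨅ u, θ u) ?_)
  · exact hb.eq_zero_of_tendsto_deriv_atTop hγ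
      ((hrot.tendsto _).comp (tendsto_atTop_ciSup hθ hbdd))
  · exact hb.eq_zero_of_tendsto_deriv_atBot hγ
      ((hrot.tendsto _).comp (tendsto_atBot_ciInf hθ hbdd))

theorem mem_of_forall_inner_sub_nonneg {D : Set E} (hD : IsCompact D) (hconv : Convex ℝ D)
    (hint : (interior D).Nonempty) {γ N : ℝ → E} (hγ : Differentiable ℝ γ)
    (hγD : frontier D = range γ) (hunit : ∀ s, ‖deriv γ s‖ = 1) (hNunit : ∀ s, ‖N s‖ = 1)
    (hNorth : ∀ s, ⟪deriv γ s, N s⟫ = 0) (hNinner : ∀ s, ∀ x ∈ D, 0 ≤ ⟪x - γ s, N s⟫)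
    {x : E} (hx : ∀ t, 0 ≤ ⟪x - γ t, N t⟫) : x ∈ D := by
  by_contra hxD
  obtain ⟨f, y, hy, hmin, hxy⟩ :=
    hD.exists_isMinOn_frontier_lt hconv (hint.mono interior_subset) hxD
  obtain ⟨t, rfl⟩ : y ∈ range γ := hγD ▸ hy
  have hγD' : ∀ u, γ u ∈ D := fun u => hD.isClosed.frontier_subset (hγD ▸ mem_range_self u)
  -- `t` minimises `f ∘ γ`, so `f` kills `γ' t` and is a multiple of `⟪N t, ·⟫`
  have hfT : f (deriv γ t) = 0 :=
    (IsMinOn.isLocalMin (f := fun u => f (γ u)) (s := univ) (fun u _ => hmin (hγD' u))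
      univ_mem).hasDerivAt_eq_zero (f.hasFDerivAt.comp_hasDerivAt t (hγ t).hasDerivAt)
  have hf : ∀ w, f w = ⟪N t, w⟫ * f (N t) := fun w => by
    conv_lhs => rw [← inner_smul_add_inner_smul_eq
      (by simp [hunit t, hNunit t, hNorth t] : Orthonormal ℝ ![deriv γ t, N t]) w]
    simp [hfT]
  have hfN : f (N t) < 0 := by
    have h := hx t
    rw [← sub_neg, ← map_sub, hf, real_inner_comm] at hxy
    nlinarith
  -- hence `f` is constant on `D`, which is impossible at an interior point
  obtain ⟨p, hp⟩ := hint
  have hpmin : IsMinOn f D p := fun z hz => by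
    have h := hNinner t p (interior_subset hp)
    have : f (p - γ t) ≤ 0 := by rw [hf, real_inner_comm]; nlinarith
    rw [map_sub] at this
    exact (sub_nonpos.mp this).trans (hmin hz)
  simp [StrongDual.eq_zero_of_isMinOn_of_mem_interior hpmin hp] at hxy

section UnitSpeedCurve

variable {γ N : ℝ → E} (hγ : ContDiff ℝ 2 γ) (hunit : ∀ s, ‖deriv γ s‖ = 1)
  (hNunit : ∀ s, ‖N s‖ = 1) (hNorth : ∀ s, ⟪deriv γ s, N s⟫ = 0)
include hγ hunit hNunit hNorth

theorem hasDerivAt_deriv_eq_inner_smul (u : ℝ) :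
    HasDerivAt (deriv γ) (⟪deriv (deriv γ) u, N u⟫ • N u) u := by
  have h := (hγ.differentiable_deriv_two u).hasDerivAt
  exact h.congr_deriv (h.eq_inner_smul_of_norm_eq_one hunit (hNunit u) (hNorth u))

theorem exists_orientation_eq_rightAngleRotation_deriv
    (hcurv : ∀ s, 0 < ⟪deriv (deriv γ) s, N s⟫) :
    ∃ o : Orientation ℝ E (Fin 2), ∀ u, N u = o.rightAngleRotation (deriv γ u) := by
  have hNc : Continuous N :=
    continuous_of_forall_eq_pos_smul ((hγ.deriv' (n := 1)).continuous_deriv_one) hcurv hNunit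
      fun u => (hasDerivAt_deriv_eq_inner_smul hγ hunit hNunit hNorth u).deriv
  obtain ⟨o, ho⟩ := exists_orientation_rightAngleRotation_eq
    (by simp [hunit 0, hNunit 0, hNorth 0] : Orthonormal ℝ ![deriv γ 0, N 0])
  exact ⟨o, o.eq_rightAngleRotation_of_continuous (hγ.continuous_deriv (by norm_num)) hNc hunit
    hNunit hNorth ho.symm⟩

theorem hasDerivAt_normal (hcurv : ∀ s, 0 < ⟪deriv (deriv γ) s, N s⟫) (u : ℝ) :
    HasDerivAt N (-⟪deriv (deriv γ) u, N u⟫ • deriv γ u) u := by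
  obtain ⟨o, hNJ⟩ := exists_orientation_eq_rightAngleRotation_deriv hγ hunit hNunit hNorth hcurv
  rw [show N = fun u => o.rightAngleRotation (deriv γ u) from funext hNJ]
  refine ((o.rightAngleRotation.toContinuousLinearEquiv : E →L[ℝ] E).hasFDerivAt.comp_hasDerivAt
    u (hasDerivAt_deriv_eq_inner_smul hγ hunit hNunit hNorth u)).congr_deriv ?_
  change o.rightAngleRotation (_ • N u) = _
  rw [map_smul, hNJ u, o.rightAngleRotation_rightAngleRotation, smul_neg, neg_smul]

theorem exists_turningAngle (hb : IsBounded (range γ))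
    (hcurv : ∀ s, 0 < ⟪deriv (deriv γ) s, N s⟫) (s : ℝ) :
    ∃ θ : ℝ → ℝ, (∀ u, HasDerivAt θ ⟪deriv (deriv γ) u, N u⟫ u) ∧
      ∀ t, ∃ t', |θ t' - θ s| ≤ π ∧ N t' = N t := by
  set κ : ℝ → ℝ := fun u => ⟪deriv (deriv γ) u, N u⟫
  obtain ⟨o, hNJ⟩ := exists_orientation_eq_rightAngleRotation_deriv hγ hunit hNunit hNorth hcurv
  have hκc : Continuous κ := ((hγ.deriv' (n := 1)).continuous_deriv_one).inner
    ((o.rightAngleRotation.continuous.comp (hγ.continuous_deriv (by norm_num))).congr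
      fun u => (hNJ u).symm)
  set θ : ℝ → ℝ := fun u => ∫ v in s..u, κ v
  have hθ : ∀ u, HasDerivAt θ (κ u) u := fun u => (hκc.integral_hasStrictDerivAt s u).hasDerivAt
  have hθs : θ s = 0 := intervalIntegral.integral_same
  have hrot : ∀ u, deriv γ u = o.rotation (θ u) (deriv γ s) := o.eq_rotation_of_hasDerivAt
    (fun u => hNJ u ▸ hasDerivAt_deriv_eq_inner_smul hγ hunit hNunit hNorth u) hθ hθs
  refine ⟨θ, hθ, fun t => ?_⟩
  obtain ⟨t', ht'⟩ := o.surjective_of_hasDerivAt_rotation (fun h => by simpa [h] using hunit s)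
    (fun u => hrot u ▸ (hγ.differentiable (by norm_num) u).hasDerivAt) hb
    (monotone_of_hasDerivAt_nonneg hθ fun u => (hcurv u).le)
    (continuous_iff_continuousAt.2 fun u => (hθ u).continuousAt) (θ t : Real.Angle).toReal
  refine ⟨t', ?_, by rw [hNJ, hNJ, hrot t', hrot t, ht', Real.Angle.coe_toReal]⟩
  rw [ht', hθs, sub_zero, abs_le]
  exact ⟨(Real.Angle.neg_pi_lt_toReal _).le, Real.Angle.toReal_le_pi _⟩

theorem one_div_le_inner_of_curvature_le (hb : IsBounded (range γ))
    (hsupp : ∀ s t, 0 ≤ ⟪γ t - γ s, N s⟫) {l : ℝ}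
    (hcurv : ∀ s, 0 < ⟪deriv (deriv γ) s, N s⟫ ∧ ⟪deriv (deriv γ) s, N s⟫ ≤ l) (s t : ℝ) :
    1 / l ≤ ⟪γ s + (1 / l) • N s - γ t, N t⟫ := by
  obtain ⟨θ, hθ, hrec⟩ := exists_turningAngle hγ hunit hNunit hNorth hb (fun u => (hcurv u).1) s
  obtain ⟨t', hst', hNt⟩ := hrec t
  -- `γ t` and `γ t'` lie on the same supporting line
  have hγt : ⟪γ t - γ t', N t⟫ = 0 := by
    have h := hsupp t t'
    rw [← neg_sub, inner_neg_left] at h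
    exact le_antisymm (by linarith) (hNt ▸ hsupp t' t)
  calc 1 / l ≤ ⟪γ s + (1 / l) • N s - γ t', N t'⟫ :=
        one_div_le_inner_of_abs_sub_le_pi (fun u => (hγ.differentiable (by norm_num) u).hasDerivAt)
          (hasDerivAt_deriv_eq_inner_smul hγ hunit hNunit hNorth)
          (hasDerivAt_normal hγ hunit hNunit hNorth fun u => (hcurv u).1) hunit hNorth hθ
          (fun u => (hcurv u).1.le) (fun u => (hcurv u).2) (hNunit s) hst'
    _ = ⟪γ s + (1 / l) • N s - γ t, N t⟫ := by
        rw [hNt, show γ s + (1 / l) • N s - γ t' = γ s + (1 / l) • N s - γ t + (γ t - γ t') by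
          abel, inner_add_left, hγt, add_zero]

end UnitSpeedCurve

end TwoDim

theorem blaschke_rolling_B_plane_general
    (D : Set (EuclideanSpace ℝ (Fin 2)))
    (hDcompact : IsCompact D) (hDconv : Convex ℝ D) (hDint : (interior D).Nonempty)
    (γ N : ℝ → EuclideanSpace ℝ (Fin 2))
    (hγ : ContDiff ℝ 2 γ) (hγD : frontier D = Set.range γ)
    (hunit : ∀ s, ‖deriv γ s‖ = 1)
    (hNunit : ∀ s, ‖N s‖ = 1)
    (hNorth : ∀ s, ⟪deriv γ s, N s⟫ = 0)
    (hNinner : ∀ s, ∀ x ∈ D, 0 ≤ ⟪x - γ s, N s⟫)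
    (l : ℝ)
    (hcurv : ∀ s, 0 < ⟪deriv (deriv γ) s, N s⟫ ∧ ⟪deriv (deriv γ) s, N s⟫ ≤ l) :
    ∀ s : ℝ, Metric.closedBall (γ s + (1 / l) • N s) (1 / l) ⊆ D := by
  have : Fact (finrank ℝ (EuclideanSpace ℝ (Fin 2)) = 2) := ⟨finrank_euclideanSpace_fin⟩
  have hγD' : ∀ t, γ t ∈ D := fun t => hDcompact.isClosed.frontier_subset (hγD ▸ mem_range_self t)
  have key := one_div_le_inner_of_curvature_le hγ hunit hNunit hNorth
    (hDcompact.isBounded.subset (range_subset_iff.2 hγD')) (fun s t => hNinner s _ (hγD' t)) hcurv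
  intro s z hz
  exact mem_of_forall_inner_sub_nonneg hDcompact hDconv hDint (hγ.differentiable (by norm_num))
    hγD hunit hNunit hNorth hNinner fun t =>
      inner_sub_nonneg_of_mem_closedBall (hNunit t) (key s t) hz

/-- Blaschke's Rolling Theorem, part B, plane version with explicit boundary curve:
if the frontier of a compact convex plane set `D` is traced by a unit-speed C² curve
`γ` with inner unit normal `N` and curvature `0 < ⟪γ''(s), N(s)⟫ ≤ l`, then the
closed disc of radius `1/l` centered at `γ(s) + (1/l)·N(s)` is contained in `D`. -/
theorem blaschke_rolling_B_plane
    (D : Set (EuclideanSpace ℝ (Fin 2)))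
    (hDcompact : IsCompact D) (hDconv : Convex ℝ D) (hDint : (interior D).Nonempty)
    (γ N : ℝ → EuclideanSpace ℝ (Fin 2))
    (hγ : ContDiff ℝ 2 γ) (hγD : frontier D = Set.range γ)
    (hunit : ∀ s, ‖deriv γ s‖ = 1)
    (hNunit : ∀ s, ‖N s‖ = 1)
    (hNorth : ∀ s, ⟪deriv γ s, N s⟫ = 0)
    (hNinner : ∀ s, ∀ x ∈ D, 0 ≤ ⟪x - γ s, N s⟫)
    (l : ℝ) (hl : 0 < l)
    (hcurv : ∀ s, 0 < ⟪deriv (deriv γ) s, N s⟫ ∧ ⟪deriv (deriv γ) s, N s⟫ ≤ l) :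
    ∀ s : ℝ, Metric.closedBall (γ s + (1 / l) • N s) (1 / l) ⊆ D :=
  blaschke_rolling_B_plane_general D hDcompact hDconv hDint γ N hγ hγD hunit hNunit hNorth hNinner l
    hcurv
end
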